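/- Let V be a finite-dimensional real inner product space, W a real inner product space, and α : V × V → W a symmetric bilinear map. Suppose there is an orthonormal basis (e₁, …, e_m) of V with α(e_i, e_j) = 0 for all i ≠ j. Then for every ξ ∈ W, the self-adjoint operators A_ξ defined by ⟨A_ξ x, y⟩ = ⟨α(x, y), ξ⟩ pairwise commute: A_ξ ∘ A_ζ = A_ζ ∘ A_ξ for all ξ, ζ ∈ W. -/
import Mathlib


open RealInnerProductSpace

theorem stmt_4 {V W : Type*} [NormedAddCommGroup V] [InnerProductSpace ℝ V]
    [FiniteDimensional ℝ V] [NormedAddCommGroup W] [InnerProductSpace ℝ W]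
    (α : V →ₗ[ℝ] V →ₗ[ℝ] W) (hsymm : ∀ x y, α x y = α y x)
    (A : W → (V →ₗ[ℝ] V)) (hA : ∀ ξ x y, ⟪A ξ x, y⟫ = ⟪α x y, ξ⟫)
    (e : OrthonormalBasis (Fin (Module.finrank ℝ V)) ℝ V)
    (hdiag : ∀ i j, i ≠ j → α (e i) (e j) = 0) :
    ∀ ξ ζ : W, (A ξ) ∘ₗ (A ζ) = (A ζ) ∘ₗ (A ξ) := by
  have key : ∀ ξ j, A ξ (e j) = ⟪α (e j) (e j), ξ⟫ • e j := by
    intro ξ j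
    apply ext_inner_right ℝ
    intro y
    rw [← e.sum_repr y, inner_sum, inner_sum]
    refine Finset.sum_congr rfl fun i _ => ?_
    rw [hA]
    rcases eq_or_ne i j with h | h
    · subst h
      simp [real_inner_smul_left, real_inner_smul_right, real_inner_self_eq_norm_sq,
        e.orthonormal.1 i]
    · simp [map_smul, real_inner_smul_left, real_inner_smul_right,
        hdiag j i (Ne.symm h), e.orthonormal.2 (Ne.symm h)]
  intro ξ ζ
  apply e.toBasis.ext
  intro j
  simp only [LinearMap.comp_apply, e.coe_toBasis, key, map_smul]
  rw [smul_comm]
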